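/- In the 2-LCCP model with n coupons, the minimal possible number of samples until complete recovery equals ⌈2n/3⌉. -/

import Mathlib

/-- The auxiliary coupon graph of the 2-LCCP model: two coupons are adjacent iff the
pair was sampled together. -/
def sampleGraph {n : ℕ} (S : Set (Finset (Fin n))) : SimpleGraph (Fin n) where
  Adj a b := a ≠ b ∧ ({a, b} : Finset (Fin n)) ∈ S
  symm := by
    constructor
    intro a b h
    exact ⟨h.1.symm, by rw [Finset.pair_comm]; exact h.2⟩
  loopless := by constructor; intro a h; exact h.1 rfl

/-!
A graph on `n` vertices with `c` components has at least `n - c` edges, and `c ≤ n / 3` when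
every component has at least three vertices; as each edge of the sample graph is a sample, at
least `n - n / 3 = ⌈2n/3⌉` samples are needed. Conversely, for `m = n / 3` the `n - m` samples
`{w, w % m}` with `m ≤ w < n` form `m` disjoint stars, the one centred at `r < m` containing
`r`, `r + m` and `r + 2m`.
-/

namespace SimpleGraph

variable {V : Type*} {G : SimpleGraph V}

lemma Reachable.exists_adj_dist_lt {v r : V} (hr : G.Reachable v r) (hne : v ≠ r) :
    ∃ u, G.Adj v u ∧ G.dist u r < G.dist v r := by
  obtain ⟨p, hp⟩ := hr.exists_walk_length_eq_dist
  cases p with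
  | nil => exact absurd rfl hne
  | cons h q => exact ⟨_, h, (dist_le q).trans_lt (by simp [← hp])⟩

/-- Every vertex other than the chosen root of its component is sent to the first edge of a
shortest path to that root; two vertices sent to the same edge would each be strictly closer to
the root than the other. -/
theorem card_le_card_edgeSet_add_card_connectedComponent [Finite V] :
    Nat.card V ≤ Nat.card G.edgeSet + Nat.card G.ConnectedComponent := by
  classical
  set root : V → V := fun v => (G.connectedComponentMk v).out
  have reach_root (v : V) : G.Reachable v (root v) :=
    ConnectedComponent.exact (G.connectedComponentMk v).out_eq.symm
  choose parent adj_parent dist_parent using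
    fun v (h : v ≠ root v) => (reach_root v).exists_adj_dist_lt h
  have root_parent (v : V) (h : v ≠ root v) : root (parent v h) = root v := by
    simp only [root, ConnectedComponent.sound (adj_parent v h).reachable]
  let f (v : V) : G.edgeSet ⊕ G.ConnectedComponent :=
    if h : v = root v then .inr (G.connectedComponentMk v) else
      .inl ⟨s(v, parent v h), G.mem_edgeSet.mpr (adj_parent v h)⟩
  have hf : Function.Injective f := by
    intro v w hvw
    dsimp only [f] at hvw
    by_cases hv : v = root v <;> by_cases hw : w = root w
    · rw [dif_pos hv, dif_pos hw, Sum.inr.injEq] at hvw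
      rw [hv, hw]
      exact congrArg Quot.out hvw
    · simp [dif_pos hv, dif_neg hw] at hvw
    · simp [dif_neg hv, dif_pos hw] at hvw
    · rw [dif_neg hv, dif_neg hw, Sum.inl.injEq, Subtype.mk.injEq, Sym2.eq_iff] at hvw
      rcases hvw with ⟨rfl, -⟩ | ⟨hv', hw'⟩
      · rfl
      · have same_root : root v = root w := by rw [hv', root_parent]
        have h₁ := dist_parent v hv
        have h₂ := dist_parent w hw
        rw [hw', same_root] at h₁
        rw [← hv'] at h₂
        omega
  simpa [Nat.card_sum] using Nat.card_le_card_of_injective f hf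

theorem mul_card_connectedComponent_le [Finite V] {k : ℕ}
    (hk : ∀ C : G.ConnectedComponent, k ≤ C.supp.ncard) :
    k * Nat.card G.ConnectedComponent ≤ Nat.card V := by
  classical
  have := Fintype.ofFinite V
  have := Fintype.ofFinite G.ConnectedComponent
  rw [Nat.card_eq_fintype_card, Nat.card_eq_fintype_card, ← Finset.card_univ,
    ← Finset.card_univ]
  refine Finset.mul_card_image_le_card_of_maps_to (f := G.connectedComponentMk)
    (fun _ _ => Finset.mem_univ _) k fun C _ => (hk C).trans_eq ?_
  rw [Set.ncard_eq_toFinset_card']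
  congr 1
  ext v
  simp [ConnectedComponent.mem_supp_iff]

end SimpleGraph

open SimpleGraph

theorem card_edgeSet_sampleGraph_le {n : ℕ} (S : Set (Finset (Fin n))) :
    Nat.card (sampleGraph S).edgeSet ≤ Nat.card S := by
  classical
  refine Nat.card_le_card_of_injective (fun e => ⟨e.1.toFinset, ?_⟩) fun e e' h => ?_
  · obtain ⟨e, he⟩ := e
    induction e with
    | h a b => simpa [Sym2.toFinset_mk_eq] using he.2
  · ext1
    refine Sym2.ext fun x => ?_
    simpa using congrArg (x ∈ ·.1) h

section StarSamples

def starSamples (m n : ℕ) (i : Fin (n - m)) : Finset (Fin n) :=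
  {⟨m + i, by omega⟩, ⟨(m + i) % m, (Nat.mod_le _ _).trans_lt (by omega)⟩}

variable {m n : ℕ}

lemma card_starSamples (hm : 0 < m) (i : Fin (n - m)) : (starSamples m n i).card = 2 :=
  Finset.card_pair <| by
    rw [ne_eq, Fin.ext_iff]
    exact ((Nat.mod_lt _ hm).trans_le (Nat.le_add_right m i)).ne'

lemma reachable_mod_starSamples (w : Fin n) :
    (sampleGraph (Set.range (starSamples m n))).Reachable w
      ⟨w % m, (Nat.mod_le _ _).trans_lt w.isLt⟩ := by
  obtain rfl | hm := m.eq_zero_or_pos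
  · simp
  by_cases hw : w < m
  · simp [Nat.mod_eq_of_lt hw]
  refine Adj.reachable ⟨?_, ⟨w - m, Nat.sub_lt_sub_right (not_lt.mp hw) w.isLt⟩, ?_⟩
  · rw [ne_eq, Fin.ext_iff]
    exact ((Nat.mod_lt _ hm).trans_le (not_lt.mp hw)).ne'
  · ext u
    simp only [starSamples, Finset.mem_insert, Finset.mem_singleton, Fin.ext_iff]
    rw [Nat.add_sub_cancel' (not_lt.mp hw)]

theorem three_le_ncard_supp_starSamples (hm : 0 < m) (hmn : 3 * m ≤ n) (v : Fin n) :
    3 ≤ ((sampleGraph (Set.range (starSamples m n))).connectedComponentMk v).supp.ncard := by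
  set G := sampleGraph (Set.range (starSamples m n))
  have hr : v % m < m := Nat.mod_lt _ hm
  let w (j : Fin 3) : Fin n :=
    ⟨v % m + j * m, by have := Nat.mul_le_mul_right m (Nat.le_of_lt_succ j.isLt); omega⟩
  have w_mem (j : Fin 3) : w j ∈ (G.connectedComponentMk v).supp := by
    rw [ConnectedComponent.mem_supp_iff, ConnectedComponent.eq]
    have := reachable_mod_starSamples (m := m) (w j)
    simp only [w, Nat.add_mul_mod_self_right, Nat.mod_mod] at this
    exact this.trans (reachable_mod_starSamples v).symm
  refine (Set.two_lt_ncard_iff (Set.toFinite _)).mpr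
    ⟨w 0, w 1, w 2, w_mem 0, w_mem 1, w_mem 2, ?_, ?_, ?_⟩ <;> simp [w, Fin.ext_iff] <;> omega

end StarSamples

/-- In the 2-LCCP model with `n ≥ 3` coupons, complete recovery happens exactly when
every coupon lies in a component of size `≥ 3` of the auxiliary graph of sampled
pairs; the minimal possible number of samples achieving this is `⌈2n/3⌉`
(written `(2*n+2)/3` in natural division). -/
theorem two_LCCP_min_samples (n : ℕ) (hn : 3 ≤ n) :
    IsLeast {t : ℕ | ∃ g : Fin t → Finset (Fin n),
        (∀ i, (g i).card = 2) ∧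
        (∀ v : Fin n,
          3 ≤ ((sampleGraph (Set.range g)).connectedComponentMk v).supp.ncard)}
      ((2 * n + 2) / 3) := by
  refine ⟨?_, fun t ⟨g, _, hg⟩ => ?_⟩
  · have hm : 0 < n / 3 := by omega
    rw [show (2 * n + 2) / 3 = n - n / 3 by omega]
    exact ⟨starSamples (n / 3) n, card_starSamples hm,
      three_le_ncard_supp_starSamples hm (Nat.mul_div_le n 3)⟩
  · have hV := (sampleGraph (Set.range g)).card_le_card_edgeSet_add_card_connectedComponent
    have hC := (sampleGraph (Set.range g)).mul_card_connectedComponent_le fun C => C.ind hg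
    have hE := (card_edgeSet_sampleGraph_le _).trans (Finite.card_range_le g)
    simp only [Nat.card_fin] at hV hC hE
    omega
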